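/- arXiv:2312.11769 — 6 statements merged into one kernel-verified Lean document; each statement's English description precedes it below -/
import Mathlib

section
/- Let S be a finite set of points in ℝ^d that is (C,ε)-stable with respect to μ ∈ ℝ^d and σ > 0, for some C ≥ 1 and 0 < ε ≤ 0.04, and let 0 < α ≤ 1. Then any subset S' ⊆ S with |S'| ≥ α·|S| is (1.23·C/√(0.04·α), 0.04)-stable with respect to μ and σ. -/
/-!
Testing the stability of `S` with all weights equal to one bounds the total second moment
`∑_{x ∈ S} (x - μ)(x - μ)ᵀ` by `|S| C² σ² I`, and this bound passes to every subset `S'`.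
Weights on `S'` of total mass `W ≥ 0.96 |S'| ≥ 0.96 α |S|` therefore have second moment at most
`C² σ² / (0.96 α) I`, and by Cauchy–Schwarz the squared distance of their weighted mean from `μ`
obeys the same bound; both fit under the constant `1.23 C / √(0.04 α)`. If `S'` is empty then so
is `S`, and only the mean condition `‖μ‖ ≤ C σ √ε` is left.
-/

open scoped BigOperators

noncomputable instance euclDecEq (d : ℕ) : DecidableEq (EuclideanSpace ℝ (Fin d)) :=
  Classical.decEq _

/-- The operator (spectral) norm of a `d × d` real matrix, viewed as a linear map on
Euclidean space. -/
noncomputable def opNorm {d : ℕ} (M : Matrix (Fin d) (Fin d) ℝ) : ℝ :=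
  ‖LinearMap.toContinuousLinearMap (Matrix.toEuclideanLin M)‖

/-- The outer product `u uᵀ` as a matrix. -/
noncomputable def outerMat {d : ℕ} (u : EuclideanSpace ℝ (Fin d)) : Matrix (Fin d) (Fin d) ℝ :=
  Matrix.of fun a b => u a * u b

/-- The mean of a finite set of points in `ℝ^d`. -/
noncomputable def fmean {d : ℕ} (S : Finset (EuclideanSpace ℝ (Fin d))) :
    EuclideanSpace ℝ (Fin d) :=
  (S.card : ℝ)⁻¹ • ∑ x ∈ S, x

/-- The covariance matrix of a finite set of points in `ℝ^d`. -/
noncomputable def fcov {d : ℕ} (S : Finset (EuclideanSpace ℝ (Fin d))) :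
    Matrix (Fin d) (Fin d) ℝ :=
  (S.card : ℝ)⁻¹ • ∑ x ∈ S, outerMat (x - fmean S)

/-- `σ_S`, the square root of the largest eigenvalue of the covariance matrix of `S`. -/
noncomputable def fstdev {d : ℕ} (S : Finset (EuclideanSpace ℝ (Fin d))) : ℝ :=
  Real.sqrt (opNorm (fcov S))


/-- `(C, ε)`-stability of a finite set of points with respect to `μ` and `σ`. -/
def IsStable {d : ℕ} (S : Finset (EuclideanSpace ℝ (Fin d))) (C ε : ℝ)
    (μ : EuclideanSpace ℝ (Fin d)) (σ : ℝ) : Prop :=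
  ∀ w : EuclideanSpace ℝ (Fin d) → ℝ,
    (∀ x ∈ S, 0 ≤ w x ∧ w x ≤ 1) →
    (1 - ε) * (S.card : ℝ) ≤ ∑ x ∈ S, w x →
    ‖(∑ x ∈ S, w x)⁻¹ • (∑ x ∈ S, w x • x) - μ‖ ≤ C * σ * Real.sqrt ε ∧
    ((C ^ 2 * σ ^ 2) • (1 : Matrix (Fin d) (Fin d) ℝ) -
        (∑ x ∈ S, w x)⁻¹ • ∑ x ∈ S, w x • outerMat (x - μ)).PosSemidef

open Finset Matrix
open scoped MatrixOrder

section SecondMoment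

variable {d : ℕ}

lemma outerMat_eq_vecMulVec (u : EuclideanSpace ℝ (Fin d)) : outerMat u = vecMulVec u u := rfl

lemma outerMat_nonneg (u : EuclideanSpace ℝ (Fin d)) : 0 ≤ outerMat u :=
  (posSemidef_vecMulVec_self_star (u : Fin d → ℝ)).nonneg

lemma dotProduct_outerMat_mulVec (u : EuclideanSpace ℝ (Fin d)) (v : Fin d → ℝ) :
    v ⬝ᵥ outerMat u *ᵥ v = (u ⬝ᵥ v) ^ 2 := by
  rw [outerMat_eq_vecMulVec, vecMulVec_mulVec]
  simp [dotProduct_comm v, sq]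

lemma sum_smul_outerMat_le_sum_outerMat {S T : Finset (EuclideanSpace ℝ (Fin d))} (hTS : T ⊆ S)
    {w : EuclideanSpace ℝ (Fin d) → ℝ} (hw : ∀ x ∈ T, 0 ≤ w x ∧ w x ≤ 1)
    (μ : EuclideanSpace ℝ (Fin d)) :
    ∑ x ∈ T, w x • outerMat (x - μ) ≤ ∑ x ∈ S, outerMat (x - μ) :=
  calc ∑ x ∈ T, w x • outerMat (x - μ)
      ≤ ∑ x ∈ T, outerMat (x - μ) := sum_le_sum fun x hx => by
        simpa using smul_le_smul_of_nonneg_right (hw x hx).2 (outerMat_nonneg (x - μ))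
    _ ≤ ∑ x ∈ S, outerMat (x - μ) :=
        sum_le_sum_of_subset_of_nonneg hTS fun x _ _ => outerMat_nonneg _

lemma sum_mul_sq_dotProduct_le {T : Finset (EuclideanSpace ℝ (Fin d))}
    {w : EuclideanSpace ℝ (Fin d) → ℝ} {μ : EuclideanSpace ℝ (Fin d)} {c : ℝ}
    (h : ∑ x ∈ T, w x • outerMat (x - μ) ≤ c • 1) (v : Fin d → ℝ) :
    ∑ x ∈ T, w x * ((x - μ) ⬝ᵥ v) ^ 2 ≤ c * (v ⬝ᵥ v) := by
  have := (Matrix.le_iff.1 h).dotProduct_mulVec_nonneg v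
  simpa only [star_trivial, sub_mulVec, dotProduct_sub, sub_nonneg, sum_mulVec, dotProduct_sum,
    smul_mulVec, dotProduct_smul, dotProduct_outerMat_mulVec, one_mulVec, smul_eq_mul] using this

lemma norm_sq_eq_dotProduct (z : EuclideanSpace ℝ (Fin d)) : ‖z‖ ^ 2 = z ⬝ᵥ z := by
  rw [← real_inner_self_eq_norm_sq, EuclideanSpace.inner_eq_star_dotProduct, star_trivial]

lemma norm_weightedMean_sub_sq_le {T : Finset (EuclideanSpace ℝ (Fin d))}
    {w : EuclideanSpace ℝ (Fin d) → ℝ} (hw : ∀ x ∈ T, 0 ≤ w x) (hW : 0 < ∑ x ∈ T, w x)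
    {μ : EuclideanSpace ℝ (Fin d)} {c : ℝ} (hc : 0 ≤ c)
    (h : ∑ x ∈ T, w x • outerMat (x - μ) ≤ c • 1) :
    ‖(∑ x ∈ T, w x)⁻¹ • (∑ x ∈ T, w x • x) - μ‖ ^ 2 ≤ c / ∑ x ∈ T, w x := by
  set W := ∑ x ∈ T, w x
  set z := W⁻¹ • (∑ x ∈ T, w x • x) - μ
  have hWz : ∑ x ∈ T, w x • (x - μ) = W • z := by
    simp only [z, smul_sub, sum_sub_distrib, ← sum_smul, smul_smul, mul_inv_cancel₀ hW.ne',
      one_smul, W]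
  have hlin : ∑ x ∈ T, w x * ((x - μ) ⬝ᵥ z) = W * ‖z‖ ^ 2 := by
    have := congrArg (fun y : EuclideanSpace ℝ (Fin d) => y ⬝ᵥ z) hWz
    simpa [WithLp.ofLp_sum, sum_dotProduct, norm_sq_eq_dotProduct] using this
  have hCS : (W * ‖z‖ ^ 2) ^ 2 ≤ W * (c * ‖z‖ ^ 2) :=
    calc (W * ‖z‖ ^ 2) ^ 2 = (∑ x ∈ T, w x * ((x - μ) ⬝ᵥ z)) ^ 2 := by rw [hlin]
      _ ≤ W * ∑ x ∈ T, w x * ((x - μ) ⬝ᵥ z) ^ 2 :=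
        sum_sq_le_sum_mul_sum_of_sq_le_mul T hw (fun x hx => mul_nonneg (hw x hx) (sq_nonneg _))
          fun x _ => le_of_eq (by ring)
      _ ≤ W * (c * ‖z‖ ^ 2) := by
        rw [norm_sq_eq_dotProduct]
        exact mul_le_mul_of_nonneg_left (sum_mul_sq_dotProduct_le h z) hW.le
  rw [le_div_iff₀ hW]
  nlinarith [sq_nonneg ‖z‖]

end SecondMoment

section Stability

variable {d : ℕ} {C ε σ : ℝ} {μ : EuclideanSpace ℝ (Fin d)}

theorem isStable_of_sum_outerMat_le {T : Finset (EuclideanSpace ℝ (Fin d))} {c : ℝ}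
    (hT : T.Nonempty) (hε0 : 0 ≤ ε) (hε1 : ε < 1) (hCσ : 0 ≤ C * σ) (hc : 0 ≤ c)
    (hM : ∑ x ∈ T, outerMat (x - μ) ≤ c • 1)
    (hcT : c ≤ (1 - ε) * T.card * (C ^ 2 * σ ^ 2 * ε)) :
    IsStable T C ε μ σ := by
  intro w hw hW
  have hW0 : 0 < ∑ x ∈ T, w x :=
    lt_of_lt_of_le (mul_pos (by linarith) (Nat.cast_pos.2 hT.card_pos)) hW
  have hMw : ∑ x ∈ T, w x • outerMat (x - μ) ≤ c • 1 :=
    (sum_smul_outerMat_le_sum_outerMat subset_rfl hw μ).trans hM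
  have hcW : c / ∑ x ∈ T, w x ≤ C ^ 2 * σ ^ 2 * ε := by
    rw [div_le_iff₀ hW0]
    nlinarith [mul_nonneg (mul_nonneg (sq_nonneg C) (sq_nonneg σ)) hε0]
  constructor
  · refine le_of_sq_le_sq ?_ (by positivity)
    calc _ ≤ c / ∑ x ∈ T, w x := norm_weightedMean_sub_sq_le (fun x hx => (hw x hx).1) hW0 hc hMw
      _ ≤ C ^ 2 * σ ^ 2 * ε := hcW
      _ = (C * σ * √ε) ^ 2 := by rw [mul_pow, Real.sq_sqrt hε0, mul_pow]
  · rw [← Matrix.le_iff]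
    calc (∑ x ∈ T, w x)⁻¹ • ∑ x ∈ T, w x • outerMat (x - μ)
        ≤ (∑ x ∈ T, w x)⁻¹ • c • (1 : Matrix (Fin d) (Fin d) ℝ) :=
          smul_le_smul_of_nonneg_left hMw (inv_nonneg.2 hW0.le)
      _ = (c / ∑ x ∈ T, w x) • 1 := by rw [smul_smul, div_eq_inv_mul]
      _ ≤ (C ^ 2 * σ ^ 2) • 1 :=
          smul_le_smul_of_nonneg_right (hcW.trans (mul_le_of_le_one_right (by positivity) hε1.le))
            PosSemidef.one.nonneg

lemma IsStable.sum_outerMat_le {S : Finset (EuclideanSpace ℝ (Fin d))}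
    (h : IsStable S C ε μ σ) (hε : 0 ≤ ε) :
    ∑ x ∈ S, outerMat (x - μ) ≤ ((S.card : ℝ) * (C ^ 2 * σ ^ 2)) • 1 := by
  rcases S.eq_empty_or_nonempty with rfl | hS
  · simp
  have hcard : (0 : ℝ) < S.card := Nat.cast_pos.2 hS.card_pos
  have hmoment := Matrix.le_iff.2 (h (fun _ => 1) (fun _ _ => ⟨zero_le_one, le_rfl⟩)
    (by simp only [sum_const, nsmul_eq_mul, mul_one]; nlinarith)).2
  simp only [sum_const, nsmul_eq_mul, mul_one, one_smul] at hmoment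
  calc ∑ x ∈ S, outerMat (x - μ)
      = (S.card : ℝ) • ((S.card : ℝ)⁻¹ • ∑ x ∈ S, outerMat (x - μ)) := by
        rw [smul_smul, mul_inv_cancel₀ hcard.ne', one_smul]
    _ ≤ (S.card : ℝ) • ((C ^ 2 * σ ^ 2) • 1) := smul_le_smul_of_nonneg_left hmoment hcard.le
    _ = _ := smul_smul _ _ _

lemma isStable_empty_iff : IsStable ∅ C ε μ σ ↔ ‖μ‖ ≤ C * σ * √ε := by
  refine ⟨fun h => by simpa using (h 0 (by simp) (by simp)).1, fun h w _ _ => ?_⟩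
  simpa using ⟨h, PosSemidef.one.smul (by positivity)⟩

end Stability

/-- Lemma: stability of subsets.
If `S` is `(C, ε)`-stable w.r.t. `μ` and `σ > 0` with `C ≥ 1` and `0 < ε ≤ 0.04`, then any subset
`S' ⊆ S` with `|S'| ≥ α |S|` is `(1.23 C / √(0.04 α), 0.04)`-stable w.r.t. `μ` and `σ`. -/
theorem stability_of_subsets {d : ℕ} (S : Finset (EuclideanSpace ℝ (Fin d)))
    (C ε α σ : ℝ) (μ : EuclideanSpace ℝ (Fin d))
    (hC : 1 ≤ C) (hε0 : 0 < ε) (hε : ε ≤ 0.04) (hσ : 0 < σ)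
    (hα0 : 0 < α) (hα1 : α ≤ 1)
    (hstab : IsStable S C ε μ σ) :
    ∀ S' ⊆ S, α * (S.card : ℝ) ≤ (S'.card : ℝ) →
      IsStable S' (1.23 * C / Real.sqrt (0.04 * α)) 0.04 μ σ := by
  intro S' hS'S hcard
  set B := 1.23 * C / √(0.04 * α)
  rcases S'.eq_empty_or_nonempty with rfl | hS'
  · obtain rfl : S = ∅ := card_eq_zero.1 <| by
      exact_mod_cast le_antisymm (nonpos_of_mul_nonpos_right (by simpa using hcard) hα0)
        (Nat.cast_nonneg _)
    have hCB : C ≤ B := by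
      rw [le_div_iff₀ (Real.sqrt_pos.2 (by positivity))]
      nlinarith [Real.sqrt_le_one.2 (by linarith : 0.04 * α ≤ 1)]
    rw [isStable_empty_iff] at hstab ⊢
    exact hstab.trans (by gcongr)
  · have hB : B ^ 2 * σ ^ 2 * 0.04 = 1.23 ^ 2 * (C ^ 2 * σ ^ 2) / α := by
      rw [div_pow, Real.sq_sqrt (by positivity)]
      field_simp
    have hSα : (S.card : ℝ) ≤ S'.card / α := (le_div_iff₀ hα0).2 (by linarith)
    refine isStable_of_sum_outerMat_le hS' (by norm_num) (by norm_num) (by positivity)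
      (by positivity) ((sum_le_sum_of_subset_of_nonneg hS'S fun x _ _ => outerMat_nonneg _).trans
        (hstab.sum_outerMat_le hε0.le)) ?_
    calc (S.card : ℝ) * (C ^ 2 * σ ^ 2)
        ≤ S'.card / α * (C ^ 2 * σ ^ 2) := by gcongr
      _ ≤ (1 - 0.04) * 1.23 ^ 2 * (S'.card / α * (C ^ 2 * σ ^ 2)) :=
        le_mul_of_one_le_left (by positivity) (by norm_num)
      _ = (1 - 0.04) * S'.card * (B ^ 2 * σ ^ 2 * 0.04) := by rw [hB]; ring
end

section
/- For every finite set T of m ≥ 2 points in ℝ^d there exists a finite list L of at most m²·(log₂(2m²) + 1) nonnegative real numbers such that for every subset S ⊆ T containing at least two distinct points, there exists ŝ ∈ L with ‖Cov(S)‖_op ≤ ŝ² ≤ 2·‖Cov(S)‖_op. -/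
/-!
Let `x, y ∈ S` realise the diameter `D` of `S`. Testing the quadratic form of `Cov(S)` on `x - y`
gives `D² / (2|S|) ≤ ‖Cov(S)‖`, and since every point of `S` lies within `D` of the mean,
`‖Cov(S)‖ ≤ D²`. With `m = |T|` and `a = D² / (2m)`, the norm therefore lies in `[a, 2m·a]`, so one
of the dyadic values `2ʲ a` with `2ʲ ≤ 2m²` lies in `[‖Cov(S)‖, 2‖Cov(S)‖]`. Collecting these values
over all pairs of points of `T` gives at most `m² (log₂(2m²) + 1)` candidates.
-/

open scoped BigOperators

theorem Convex.inv_card_smul_sum_mem {E ι : Type*} [AddCommGroup E] [Module ℝ E] {C : Set E}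
    (hC : Convex ℝ C) {s : Finset ι} (hs : s.Nonempty) {f : ι → E} (hf : ∀ i ∈ s, f i ∈ C) :
    (s.card : ℝ)⁻¹ • ∑ i ∈ s, f i ∈ C := by
  have := hC.centerMass_mem (t := s) (w := fun _ => (1 : ℝ)) (fun _ _ => zero_le_one)
    (by simpa using hs.card_pos) hf
  simpa [Finset.centerMass] using this

theorem exists_le_two_pow_mul_le_two_mul {a v : ℝ} (ha : 0 ≤ a) (hav : a ≤ v) :
    ∀ {N : ℕ}, v ≤ 2 ^ N * a → ∃ j ≤ N, v ≤ 2 ^ j * a ∧ 2 ^ j * a ≤ 2 * v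
  | 0, hv => ⟨0, le_rfl, hv, by rw [pow_zero, one_mul]; linarith⟩
  | N + 1, hv => by
    by_cases h : v ≤ 2 ^ N * a
    · obtain ⟨j, hj, hj'⟩ := exists_le_two_pow_mul_le_two_mul ha hav h
      exact ⟨j, by omega, hj'⟩
    · exact ⟨N + 1, le_rfl, hv, by rw [pow_succ]; linarith⟩

theorem two_mul_le_two_pow_log_two_mul_sq {m : ℕ} (hm : 2 ≤ m) :
    2 * m ≤ 2 ^ Nat.log 2 (2 * m ^ 2) := by
  set N := Nat.log 2 (2 * m ^ 2)
  have h : 2 * m ^ 2 < 2 ^ N * 2 := pow_succ 2 N ▸ Nat.lt_pow_succ_log_self (by norm_num) _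
  nlinarith

theorem Finset.exists_ne_pair_forall_norm_sub_le {E : Type*} [NormedAddCommGroup E]
    {S : Finset E} (hS : ∃ x ∈ S, ∃ y ∈ S, x ≠ y) :
    ∃ x ∈ S, ∃ y ∈ S, x ≠ y ∧ ∀ p ∈ S, ∀ q ∈ S, ‖p - q‖ ≤ ‖x - y‖ := by
  obtain ⟨x₀, hx₀, y₀, hy₀, hne⟩ := hS
  obtain ⟨⟨x, y⟩, hxy, hmax⟩ := (S ×ˢ S).exists_max_image (fun p => ‖p.1 - p.2‖)
    ⟨(x₀, y₀), Finset.mk_mem_product hx₀ hy₀⟩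
  obtain ⟨hx, hy⟩ := Finset.mem_product.mp hxy
  have hdiam : ∀ p ∈ S, ∀ q ∈ S, ‖p - q‖ ≤ ‖x - y‖ := fun p hp q hq =>
    hmax (p, q) (Finset.mk_mem_product hp hq)
  have hpos : 0 < ‖x - y‖ :=
    (norm_pos_iff.mpr (sub_ne_zero_of_ne hne)).trans_le (hdiam x₀ hx₀ y₀ hy₀)
  exact ⟨x, hx, y, hy, sub_ne_zero.mp (norm_pos_iff.mp hpos), hdiam⟩

section Covariance

variable {d : ℕ}

theorem norm_sub_fmean_le {S : Finset (EuclideanSpace ℝ (Fin d))} (hS : S.Nonempty)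
    {p : EuclideanSpace ℝ (Fin d)} {D : ℝ} (hD : ∀ q ∈ S, ‖p - q‖ ≤ D) :
    ‖p - fmean S‖ ≤ D := by
  rw [← dist_eq_norm, dist_comm]
  exact (convex_closedBall p D).inv_card_smul_sum_mem hS fun q hq => by
    simpa [dist_eq_norm, norm_sub_rev] using hD q hq

theorem toEuclideanLin_outerMat (u x : EuclideanSpace ℝ (Fin d)) :
    Matrix.toEuclideanLin (outerMat u) x = inner ℝ u x • u := by
  ext a
  simp only [Matrix.toLpLin_apply, outerMat, Matrix.mulVec, dotProduct,
    PiLp.inner_apply, RCLike.inner_apply, conj_trivial, PiLp.toLp_apply,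
    PiLp.smul_apply, smul_eq_mul, Matrix.of_apply, Finset.sum_mul]
  exact Finset.sum_congr rfl fun b _ => by ring

theorem toEuclideanLin_fcov (S : Finset (EuclideanSpace ℝ (Fin d)))
    (x : EuclideanSpace ℝ (Fin d)) :
    Matrix.toEuclideanLin (fcov S) x
      = (S.card : ℝ)⁻¹ • ∑ p ∈ S, inner ℝ (p - fmean S) x • (p - fmean S) := by
  simp only [fcov, map_smul, map_sum, LinearMap.smul_apply, LinearMap.sum_apply,
    toEuclideanLin_outerMat]

theorem inner_toEuclideanLin_fcov_self (S : Finset (EuclideanSpace ℝ (Fin d)))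
    (u : EuclideanSpace ℝ (Fin d)) :
    inner ℝ (Matrix.toEuclideanLin (fcov S) u) u
      = (S.card : ℝ)⁻¹ * ∑ p ∈ S, inner ℝ (p - fmean S) u ^ 2 := by
  simp only [toEuclideanLin_fcov, real_inner_smul_left, sum_inner, sq]

theorem inner_toEuclideanLin_self_le (M : Matrix (Fin d) (Fin d) ℝ)
    (u : EuclideanSpace ℝ (Fin d)) :
    inner ℝ (Matrix.toEuclideanLin M u) u ≤ opNorm M * ‖u‖ ^ 2 :=
  calc inner ℝ (Matrix.toEuclideanLin M u) u ≤ ‖Matrix.toEuclideanLin M u‖ * ‖u‖ :=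
        real_inner_le_norm _ _
    _ ≤ opNorm M * ‖u‖ * ‖u‖ := by
        gcongr; exact (LinearMap.toContinuousLinearMap (Matrix.toEuclideanLin M)).le_opNorm u
    _ = opNorm M * ‖u‖ ^ 2 := by ring

theorem opNorm_fcov_le {S : Finset (EuclideanSpace ℝ (Fin d))} (hS : S.Nonempty) {R : ℝ}
    (hR : ∀ p ∈ S, ‖p - fmean S‖ ≤ R) : opNorm (fcov S) ≤ R ^ 2 := by
  refine ContinuousLinearMap.opNorm_le_bound _ (sq_nonneg R) fun x => ?_
  rw [LinearMap.coe_toContinuousLinearMap', toEuclideanLin_fcov, ← dist_zero_right]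
  refine (convex_closedBall 0 _).inv_card_smul_sum_mem hS fun p hp => ?_
  rw [Metric.mem_closedBall, dist_zero_right, norm_smul, Real.norm_eq_abs]
  calc |inner ℝ (p - fmean S) x| * ‖p - fmean S‖ ≤ ‖p - fmean S‖ * ‖x‖ * ‖p - fmean S‖ := by
        gcongr; exact abs_real_inner_le_norm _ _
    _ = ‖p - fmean S‖ ^ 2 * ‖x‖ := by ring
    _ ≤ R ^ 2 * ‖x‖ := by gcongr; exact hR p hp

theorem opNorm_fcov_le_sq {S : Finset (EuclideanSpace ℝ (Fin d))} (hS : S.Nonempty)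
    {D : ℝ} (hD : ∀ p ∈ S, ∀ q ∈ S, ‖p - q‖ ≤ D) : opNorm (fcov S) ≤ D ^ 2 :=
  opNorm_fcov_le hS fun p hp => norm_sub_fmean_le hS (hD p hp)

/-- Test the quadratic form of the covariance on `u = x - y`: the two terms of `x` and `y` alone
already contribute `‖u‖⁴ / 2`. -/
theorem sq_norm_sub_div_le_opNorm_fcov {S : Finset (EuclideanSpace ℝ (Fin d))}
    {x y : EuclideanSpace ℝ (Fin d)} (hx : x ∈ S) (hy : y ∈ S) (hxy : x ≠ y) :
    ‖x - y‖ ^ 2 / (2 * S.card) ≤ opNorm (fcov S) := by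
  set u := x - y
  have hu : 0 < ‖u‖ ^ 2 := by positivity [sub_ne_zero_of_ne hxy]
  have hcard : (0 : ℝ) < S.card := by exact_mod_cast Finset.card_pos.mpr ⟨x, hx⟩
  have hpair : ‖u‖ ^ 4 / 2 ≤ ∑ p ∈ S, inner ℝ (p - fmean S) u ^ 2 := by
    have hdiff : inner ℝ (x - fmean S) u - inner ℝ (y - fmean S) u = ‖u‖ ^ 2 := by
      rw [← inner_sub_left, sub_sub_sub_cancel_right, real_inner_self_eq_norm_sq]
    calc ‖u‖ ^ 4 / 2 ≤ inner ℝ (x - fmean S) u ^ 2 + inner ℝ (y - fmean S) u ^ 2 := by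
          nlinarith [sq_nonneg (inner ℝ (x - fmean S) u + inner ℝ (y - fmean S) u)]
      _ = ∑ p ∈ {x, y}, inner ℝ (p - fmean S) u ^ 2 := by rw [Finset.sum_pair hxy]
      _ ≤ ∑ p ∈ S, inner ℝ (p - fmean S) u ^ 2 :=
          Finset.sum_le_sum_of_subset_of_nonneg (Finset.insert_subset hx (by simpa using hy))
            fun _ _ _ => sq_nonneg _
  have hquad := inner_toEuclideanLin_self_le (fcov S) u
  rw [inner_toEuclideanLin_fcov_self] at hquad
  rw [div_le_iff₀ (by positivity)]
  refine le_of_mul_le_mul_right ?_ hu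
  calc ‖u‖ ^ 2 * ‖u‖ ^ 2 = 2 * S.card * ((S.card : ℝ)⁻¹ * (‖u‖ ^ 4 / 2)) := by
        field_simp
    _ ≤ 2 * S.card * ((S.card : ℝ)⁻¹ * ∑ p ∈ S, inner ℝ (p - fmean S) u ^ 2) := by gcongr
    _ ≤ 2 * S.card * (opNorm (fcov S) * ‖u‖ ^ 2) := by gcongr
    _ = opNorm (fcov S) * (2 * S.card) * ‖u‖ ^ 2 := by ring

end Covariance

section Candidates

variable {d : ℕ}

noncomputable def candidateStdevs (T : Finset (EuclideanSpace ℝ (Fin d))) (N : ℕ) : List ℝ :=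
  ((T ×ˢ T) ×ˢ Finset.range (N + 1)).toList.map fun x =>
    √(2 ^ x.2 * (‖x.1.1 - x.1.2‖ ^ 2 / (2 * T.card)))

theorem length_candidateStdevs (T : Finset (EuclideanSpace ℝ (Fin d))) (N : ℕ) :
    (candidateStdevs T N).length = T.card ^ 2 * (N + 1) := by
  simp [candidateStdevs, sq]

theorem nonneg_of_mem_candidateStdevs {T : Finset (EuclideanSpace ℝ (Fin d))} {N : ℕ} {s : ℝ}
    (hs : s ∈ candidateStdevs T N) : 0 ≤ s := by
  obtain ⟨_, _, rfl⟩ := List.mem_map.mp hs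
  exact Real.sqrt_nonneg _

theorem exists_mem_candidateStdevs {T S : Finset (EuclideanSpace ℝ (Fin d))} {N : ℕ}
    (hN : 2 * T.card ≤ 2 ^ N) (hST : S ⊆ T) (hS : ∃ x ∈ S, ∃ y ∈ S, x ≠ y) :
    ∃ s ∈ candidateStdevs T N, opNorm (fcov S) ≤ s ^ 2 ∧ s ^ 2 ≤ 2 * opNorm (fcov S) := by
  obtain ⟨x, hx, y, hy, hxy, hdiam⟩ := Finset.exists_ne_pair_forall_norm_sub_le hS
  have hcardT : (0 : ℝ) < T.card := by exact_mod_cast Finset.card_pos.mpr ⟨x, hST hx⟩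
  set a := ‖x - y‖ ^ 2 / (2 * T.card) with a_def
  have ha : 0 ≤ a := by positivity
  have hav : a ≤ opNorm (fcov S) := by
    refine le_trans ?_ (sq_norm_sub_div_le_opNorm_fcov hx hy hxy)
    rw [a_def]
    have hcardS : (0 : ℝ) < S.card := by exact_mod_cast Finset.card_pos.mpr ⟨x, hx⟩
    gcongr
  have hvN : opNorm (fcov S) ≤ 2 ^ N * a := by
    refine (opNorm_fcov_le_sq ⟨x, hx⟩ hdiam).trans ?_
    have hN' : 2 * (T.card : ℝ) ≤ 2 ^ N := by exact_mod_cast hN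
    calc ‖x - y‖ ^ 2 = 2 * T.card * a := by rw [a_def]; field_simp
      _ ≤ 2 ^ N * a := by gcongr
  obtain ⟨j, hj, hlow, hhigh⟩ := exists_le_two_pow_mul_le_two_mul ha hav hvN
  refine ⟨√(2 ^ j * a), ?_, ?_⟩
  · exact List.mem_map.mpr ⟨((x, y), j), by simp [hST hx, hST hy, Nat.lt_succ_of_le hj], rfl⟩
  · rw [Real.sq_sqrt (by positivity)]
    exact ⟨hlow, hhigh⟩

end Candidates

/-- List of candidate standard deviations.
For every finite set `T` of `m ≥ 2` points in `ℝ^d` there is a list `L` of at most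
`m² (log₂(2 m²) + 1)` nonnegative reals such that every `S ⊆ T` with at least two distinct points
admits `ŝ ∈ L` with `‖Cov(S)‖_op ≤ ŝ² ≤ 2 ‖Cov(S)‖_op`. -/
theorem candidate_stdev_list {d : ℕ} (T : Finset (EuclideanSpace ℝ (Fin d)))
    (hm : 2 ≤ T.card) :
    ∃ L : List ℝ, (∀ s ∈ L, (0 : ℝ) ≤ s) ∧
      (L.length : ℝ) ≤ (T.card : ℝ) ^ 2 * (Real.logb 2 (2 * (T.card : ℝ) ^ 2) + 1) ∧
      ∀ S ⊆ T, (∃ x ∈ S, ∃ y ∈ S, x ≠ y) →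
        ∃ shat ∈ L, opNorm (fcov S) ≤ shat ^ 2 ∧ shat ^ 2 ≤ 2 * opNorm (fcov S) := by
  set N := Nat.log 2 (2 * T.card ^ 2)
  refine ⟨candidateStdevs T N, fun _ => nonneg_of_mem_candidateStdevs, ?_,
    fun S hST hS => exists_mem_candidateStdevs (two_mul_le_two_pow_log_two_mul_sq hm) hST hS⟩
  have hlog : (N : ℝ) ≤ Real.logb 2 (2 * (T.card : ℝ) ^ 2) := by
    exact_mod_cast Real.natLog_le_logb (2 * T.card ^ 2) 2
  rw [length_candidateStdevs]
  push_cast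
  gcongr
end

section
/- Let T be a finite set of points in ℝ^d, let S_1,…,S_k ⊆ T be pairwise disjoint subsets, let μ ∈ ℝ^d, s > 0, C > 0, α ∈ (0,1), and let v_1,…,v_k be unit vectors in ℝ^d with k ≤ ⌊1/α⌋. Suppose the weights w_x ∈ [0,1] for x ∈ T satisfy the Ky-Fan constraint ‖∑_{x∈T} w_x (x−μ)(x−μ)ᵀ‖_(⌊1/α⌋) ≤ (2C²s²/α)·∑_{x∈T} w_x. For each j ∈ [k] define S_j^> = {x ∈ S_j : v_jᵀ(x−μ) > 45·C·s/√α}. Then ∑_{j=1}^k ∑_{x∈S_j^>} w_x ≤ 0.001·∑_{x∈T} w_x. -/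
open scoped BigOperators

/-- The Ky-Fan `κ`-norm of a symmetric positive semidefinite `d × d` matrix: the sum of its
`min(κ, d)` largest eigenvalues, characterized as the supremum of `∑ i ⟪f i, M (f i)⟫` over
orthonormal families `f` of `min(κ, d)` vectors. -/
noncomputable def kyFan {d : ℕ} (κ : ℕ) (M : Matrix (Fin d) (Fin d) ℝ) : ℝ :=
  sSup { t : ℝ | ∃ f : Fin (min κ d) → (Fin d → ℝ),
    (∀ i j, (∑ a, f i a * f j a) = if i = j then (1 : ℝ) else 0) ∧
    t = ∑ i, ∑ a, ∑ b, f i a * M a b * f i b }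

/-! Gram–Schmidt applied to `v₁, …, v_k` yields an orthonormal basis whose first `k` vectors
span every `v_j`; its first `min(⌊1/α⌋, d)` vectors `e_i` are admissible in the Ky-Fan supremum,
so `∑_x w_x ∑_i ⟪e_i, x − μ⟫² ≤ (2C²s²/α) ∑_x w_x`. A point `x ∈ S_j^>` has
`∑_i ⟪e_i, x − μ⟫² ≥ ⟪v_j, x − μ⟫² > 2025 C²s²/α`, and the `S_j` are disjoint, so by Chebyshev's
inequality their total weight is at most `(2/2025) ∑_x w_x`. -/

lemma EuclideanSpace.real_inner_eq_sum {d : ℕ} (u y : EuclideanSpace ℝ (Fin d)) :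
    inner ℝ u y = ∑ a, u a * y a := by
  simp [PiLp.inner_apply, RCLike.inner_apply, mul_comm]

lemma abs_le_one_of_sum_mul_self_eq_one {ι : Type*} [Fintype ι] {g : ι → ℝ}
    (hg : ∑ a, g a * g a = 1) (a : ι) : |g a| ≤ 1 :=
  abs_le_one_iff_mul_self_le_one.mpr <|
    hg ▸ Finset.single_le_sum (fun b _ => mul_self_nonneg (g b)) (Finset.mem_univ a)

lemma bddAbove_kyFan_set {d : ℕ} (κ : ℕ) (M : Matrix (Fin d) (Fin d) ℝ) :
    BddAbove { t : ℝ | ∃ f : Fin (min κ d) → (Fin d → ℝ),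
      (∀ i j, (∑ a, f i a * f j a) = if i = j then (1 : ℝ) else 0) ∧
      t = ∑ i, ∑ a, ∑ b, f i a * M a b * f i b } := by
  refine ⟨∑ _i : Fin (min κ d), ∑ a, ∑ b, |M a b|, ?_⟩
  rintro t ⟨f, hf, rfl⟩
  have hf1 : ∀ i a, |f i a| ≤ 1 := fun i =>
    abs_le_one_of_sum_mul_self_eq_one (by simpa using hf i i)
  gcongr with i _ a _ b _
  calc f i a * M a b * f i b ≤ |f i a * M a b * f i b| := le_abs_self _
    _ = |f i a| * |M a b| * |f i b| := by rw [abs_mul, abs_mul]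
    _ ≤ 1 * |M a b| * 1 := by gcongr <;> exact hf1 _ _
    _ = |M a b| := by ring

lemma sum_quadForm_le_kyFan {d : ℕ} (κ : ℕ) (M : Matrix (Fin d) (Fin d) ℝ)
    (e : Fin (min κ d) → EuclideanSpace ℝ (Fin d)) (he : Orthonormal ℝ e) :
    ∑ i, ∑ a, ∑ b, e i a * M a b * e i b ≤ kyFan κ M :=
  le_csSup (bddAbove_kyFan_set κ M) ⟨fun i a => e i a, fun i j => by
    rw [← EuclideanSpace.real_inner_eq_sum, orthonormal_iff_ite.mp he], rfl⟩

lemma quadForm_sum_smul_outerMat {ι : Type*} {d : ℕ} (T : Finset ι) (w : ι → ℝ)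
    (y : ι → EuclideanSpace ℝ (Fin d)) (u : EuclideanSpace ℝ (Fin d)) :
    ∑ a, ∑ b, u a * (∑ x ∈ T, w x • outerMat (y x)) a b * u b
      = ∑ x ∈ T, w x * inner ℝ u (y x) ^ 2 := by
  simp only [EuclideanSpace.real_inner_eq_sum, sq, Finset.mul_sum, Matrix.sum_apply,
    Matrix.smul_apply, outerMat, Matrix.of_apply, smul_eq_mul, Finset.sum_mul]
  rw [Finset.sum_congr rfl fun a _ => Finset.sum_comm, Finset.sum_comm]
  refine Finset.sum_congr rfl fun x _ => ?_
  rw [Finset.sum_comm]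
  exact Finset.sum_congr rfl fun a _ => Finset.sum_congr rfl fun b _ => by ring

lemma sum_mul_sum_inner_sq_le_kyFan {ι : Type*} {d : ℕ} (κ : ℕ) (T : Finset ι) (w : ι → ℝ)
    (y : ι → EuclideanSpace ℝ (Fin d)) (e : Fin (min κ d) → EuclideanSpace ℝ (Fin d))
    (he : Orthonormal ℝ e) :
    ∑ x ∈ T, w x * ∑ i, inner ℝ (e i) (y x) ^ 2
      ≤ kyFan κ (∑ x ∈ T, w x • outerMat (y x)) := by
  refine le_of_eq_of_le ?_ (sum_quadForm_le_kyFan κ _ e he)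
  simp only [quadForm_sum_smul_outerMat, Finset.mul_sum]
  exact Finset.sum_comm

lemma inner_sq_le_mul_sum_inner_sq {ι E : Type*} [Fintype ι] [NormedAddCommGroup E]
    [InnerProductSpace ℝ E] (b : OrthonormalBasis ι ℝ E) (s : Finset ι) {v : E}
    (hv : ∀ i ∉ s, inner ℝ (b i) v = 0) (y : E) :
    inner ℝ v y ^ 2 ≤ ‖v‖ ^ 2 * ∑ i ∈ s, inner ℝ (b i) y ^ 2 := by
  have hexpand : inner ℝ v y = ∑ i ∈ s, inner ℝ (b i) v * inner ℝ (b i) y := by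
    rw [← b.sum_inner_mul_inner v y, ← Finset.sum_subset s.subset_univ fun i _ hi => by
      rw [real_inner_comm, hv i hi, zero_mul]]
    simp only [real_inner_comm]
  have hbessel : ∑ i ∈ s, inner ℝ (b i) v ^ 2 ≤ ‖v‖ ^ 2 :=
    b.sum_sq_inner_right v ▸ Finset.sum_le_univ_sum_of_nonneg fun _ => sq_nonneg _
  calc inner ℝ v y ^ 2 = (∑ i ∈ s, inner ℝ (b i) v * inner ℝ (b i) y) ^ 2 := by rw [hexpand]
    _ ≤ (∑ i ∈ s, inner ℝ (b i) v ^ 2) * ∑ i ∈ s, inner ℝ (b i) y ^ 2 :=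
      Finset.sum_mul_sq_le_sq_mul_sq _ _ _
    _ ≤ ‖v‖ ^ 2 * ∑ i ∈ s, inner ℝ (b i) y ^ 2 := by gcongr

lemma exists_orthonormalBasis_inner_eq_zero {E : Type*} [NormedAddCommGroup E]
    [InnerProductSpace ℝ E] [FiniteDimensional ℝ E] {d k : ℕ} (hd : Module.finrank ℝ E = d)
    (v : Fin k → E) :
    ∃ b : OrthonormalBasis (Fin d) ℝ E, ∀ (i : Fin d) (j : Fin k), k ≤ (i : ℕ) →
      inner ℝ (b i) (v j) = 0 := by
  let f : Fin d → E := fun i => if h : (i : ℕ) < k then v ⟨i, h⟩ else 0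
  refine ⟨InnerProductSpace.gramSchmidtOrthonormalBasis (by simp [hd]) f, fun i j hi => ?_⟩
  have hj : (j : ℕ) < d := by omega
  have hfj : f ⟨j, hj⟩ = v j := by simp [f]
  rw [← hfj]
  exact InnerProductSpace.gramSchmidtOrthonormalBasis_inv_triangular _ f
    (Fin.mk_lt_mk.mpr (by omega))

lemma exists_orthonormal_inner_sq_le {E : Type*} [NormedAddCommGroup E]
    [InnerProductSpace ℝ E] [FiniteDimensional ℝ E] {d k : ℕ} (hd : Module.finrank ℝ E = d)
    (κ : ℕ) (hk : k ≤ κ) (v : Fin k → E) :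
    ∃ e : Fin (min κ d) → E, Orthonormal ℝ e ∧
      ∀ j y, inner ℝ (v j) y ^ 2 ≤ ‖v j‖ ^ 2 * ∑ i, inner ℝ (e i) y ^ 2 := by
  obtain ⟨b, hb⟩ := exists_orthonormalBasis_inner_eq_zero hd v
  let ι := Fin.castLEEmb (min_le_right κ d)
  refine ⟨b ∘ ι, b.orthonormal.comp _ ι.injective, fun j y => ?_⟩
  have htail : ∀ i ∉ Finset.univ.map ι, inner ℝ (b i) (v j) = 0 := by
    intro i hi
    refine hb i j (hk.trans ?_)
    by_contra! h
    exact hi (Finset.mem_map.mpr ⟨⟨i, lt_min h i.2⟩, Finset.mem_univ _, rfl⟩)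
  simpa [Finset.sum_map] using inner_sq_le_mul_sum_inner_sq b _ htail y

lemma sum_sum_le_sum_of_pairwiseDisjoint {ι α : Type*} [DecidableEq α] {I : Finset ι}
    {S : ι → Finset α} {T : Finset α} (hdisj : (I : Set ι).PairwiseDisjoint S)
    (hS : ∀ i ∈ I, S i ⊆ T) {f : α → ℝ} (hf : ∀ x ∈ T, 0 ≤ f x) :
    ∑ i ∈ I, ∑ x ∈ S i, f x ≤ ∑ x ∈ T, f x := by
  rw [← Finset.sum_biUnion hdisj]
  exact Finset.sum_le_sum_of_subset_of_nonneg (Finset.biUnion_subset.mpr hS)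
    fun x hx _ => hf x hx

lemma sq_mul_sum_sum_filter_lt_le {ι α : Type*} [DecidableEq α] {I : Finset ι}
    {S : ι → Finset α} {T : Finset α} (hdisj : (I : Set ι).PairwiseDisjoint S)
    (hS : ∀ i ∈ I, S i ⊆ T) {w G : α → ℝ} (hw : ∀ x ∈ T, 0 ≤ w x) (hG : ∀ x ∈ T, 0 ≤ G x)
    {φ : ι → α → ℝ} (hφ : ∀ i ∈ I, ∀ x ∈ S i, φ i x ^ 2 ≤ G x) {τ : ℝ} (hτ : 0 ≤ τ) :
    τ ^ 2 * ∑ i ∈ I, ∑ x ∈ (S i).filter (fun x => τ < φ i x), w x ≤ ∑ x ∈ T, w x * G x :=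
  calc τ ^ 2 * ∑ i ∈ I, ∑ x ∈ (S i).filter (fun x => τ < φ i x), w x
      = ∑ i ∈ I, ∑ x ∈ (S i).filter (fun x => τ < φ i x), τ ^ 2 * w x := by
        simp only [Finset.mul_sum]
    _ ≤ ∑ i ∈ I, ∑ x ∈ (S i).filter (fun x => τ < φ i x), w x * G x := by
        refine Finset.sum_le_sum fun i hi => Finset.sum_le_sum fun x hx => ?_
        obtain ⟨hxS, hτx⟩ := Finset.mem_filter.mp hx
        have hτG : τ ^ 2 ≤ G x := (pow_le_pow_left₀ hτ hτx.le 2).trans (hφ i hi x hxS)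
        nlinarith [hw x (hS i hi hxS)]
    _ ≤ ∑ x ∈ T, w x * G x :=
        sum_sum_le_sum_of_pairwiseDisjoint
          (hdisj.mono fun i => Finset.filter_subset _ _)
          (fun i hi => (Finset.filter_subset _ _).trans (hS i hi))
          fun x hx => mul_nonneg (hw x hx) (hG x hx)

theorem far_points_small_weight_general {d k : ℕ} (T : Finset (EuclideanSpace ℝ (Fin d)))
    (S : Fin k → Finset (EuclideanSpace ℝ (Fin d)))
    (hSsub : ∀ j, S j ⊆ T)
    (hSdisj : ∀ j j' : Fin k, j ≠ j' → Disjoint (S j) (S j'))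
    (μ : EuclideanSpace ℝ (Fin d)) (s C α : ℝ)
    (hs : 0 < s) (hC : 0 < C) (hα0 : 0 < α)
    (v : Fin k → EuclideanSpace ℝ (Fin d)) (hv : ∀ j, ‖v j‖ = 1)
    (hk : k ≤ ⌊1 / α⌋₊)
    (w : EuclideanSpace ℝ (Fin d) → ℝ)
    (hw01 : ∀ x ∈ T, 0 ≤ w x ∧ w x ≤ 1)
    (hKF : kyFan ⌊1 / α⌋₊ (∑ x ∈ T, w x • outerMat (x - μ))
        ≤ 2 * C ^ 2 * s ^ 2 / α * ∑ x ∈ T, w x) :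
    ∑ j : Fin k, ∑ x ∈ (S j).filter
        (fun x => 45 * C * s / Real.sqrt α < (inner ℝ (v j) (x - μ) : ℝ)), w x
      ≤ 0.001 * ∑ x ∈ T, w x := by
  obtain ⟨e, he, hv_le⟩ :=
    exists_orthonormal_inner_sq_le (finrank_euclideanSpace_fin (𝕜 := ℝ)) ⌊1 / α⌋₊ hk v
  have hcapture := (sum_mul_sum_inner_sq_le_kyFan _ T w (· - μ) e he).trans hKF
  have hchebyshev := sq_mul_sum_sum_filter_lt_le (I := Finset.univ)
    (fun j _ j' _ hjj' => hSdisj j j' hjj') (fun j _ => hSsub j) (fun x hx => (hw01 x hx).1)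
    (fun x _ => Finset.sum_nonneg fun i _ => sq_nonneg (inner ℝ (e i) (x - μ)))
    (φ := fun j x => inner ℝ (v j) (x - μ))
    (fun j _ x _ => by simpa [hv j] using hv_le j (x - μ)) (by positivity : 0 ≤ 45 * C * s / √α)
  have hτ : (45 * C * s / √α) ^ 2 = 2025 * (C ^ 2 * s ^ 2 / α) := by
    rw [div_pow, Real.sq_sqrt hα0.le]; ring
  rw [hτ] at hchebyshev
  have hW : 0 ≤ ∑ x ∈ T, w x := Finset.sum_nonneg fun x hx => (hw01 x hx).1
  have hc : 0 < C ^ 2 * s ^ 2 / α := by positivity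
  refine le_of_mul_le_mul_left ?_ hc
  linear_combination (1 / 2025) * hchebyshev.trans hcapture
    + (0.001 - 2 / 2025) * mul_nonneg hc.le hW

/-- Points far from `μ` in the cluster directions have small total weight.
If the weights satisfy the Ky-Fan constraint
`‖∑_x w_x (x−μ)(x−μ)ᵀ‖_(⌊1/α⌋) ≤ (2C²s²/α) ∑_x w_x`, then the total weight of the points of each
cluster lying beyond `45 C s/√α` from `μ` along its direction `v_j` is at most `0.001 ∑_x w_x`. -/
theorem far_points_small_weight {d k : ℕ} (T : Finset (EuclideanSpace ℝ (Fin d)))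
    (S : Fin k → Finset (EuclideanSpace ℝ (Fin d)))
    (hSsub : ∀ j, S j ⊆ T)
    (hSdisj : ∀ j j' : Fin k, j ≠ j' → Disjoint (S j) (S j'))
    (μ : EuclideanSpace ℝ (Fin d)) (s C α : ℝ)
    (hs : 0 < s) (hC : 0 < C) (hα0 : 0 < α) (hα1 : α < 1)
    (v : Fin k → EuclideanSpace ℝ (Fin d)) (hv : ∀ j, ‖v j‖ = 1)
    (hk : k ≤ ⌊1 / α⌋₊)
    (w : EuclideanSpace ℝ (Fin d) → ℝ)
    (hw01 : ∀ x ∈ T, 0 ≤ w x ∧ w x ≤ 1)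
    (hKF : kyFan ⌊1 / α⌋₊ (∑ x ∈ T, w x • outerMat (x - μ))
        ≤ 2 * C ^ 2 * s ^ 2 / α * ∑ x ∈ T, w x) :
    ∑ j : Fin k, ∑ x ∈ (S j).filter
        (fun x => 45 * C * s / Real.sqrt α < (inner ℝ (v j) (x - μ) : ℝ)), w x
      ≤ 0.001 * ∑ x ∈ T, w x :=
  far_points_small_weight_general T S hSsub hSdisj μ s C α hs hC hα0 v hv hk w hw01 hKF
end

section
/- Let T be a finite set of n points in ℝ^d, let S_1,…,S_k ⊆ T be pairwise disjoint nonempty subsets, let μ ∈ ℝ^d, s > 0, C ≥ 1, and α ∈ (0,1). Suppose that for every j ∈ [k] with σ_{S_j} < s/100 it holds that ‖μ − μ_{S_j}‖₂ ≥ 46·C·s/√α; for each such j let v_j be the unit vector in the direction of μ_{S_j} − μ and define S_j^≤ = {x ∈ S_j : v_jᵀ(x−μ) ≤ 45·C·s/√α}. Suppose the weights w_x ∈ [0,1] for x ∈ T satisfy ∑_{x∈T} w_x ≥ 0.97·α·n. Then ∑_{j : σ_{S_j} < s/100} ∑_{x∈S_j^≤} w_x ≤ 0.002·∑_{x∈T}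 w_x. -/
open scoped BigOperators

/-! A point of `S_j^≤` lies at least `t = C s/√α` behind the mean of `S_j` along `v_j`, because
that mean is at least `46 t` ahead of `μ`. Chebyshev's inequality in direction `v_j` then bounds the
fraction of such points by `σ_{S_j}²/t² ≤ (s/100)² α/(C s)² ≤ α/10⁴`. As the clusters are disjoint
subsets of `T` and the weights are at most `1`, the total is at most `α n/10⁴ ≤ 0.002 ∑ w`. -/

open Finset RealInnerProductSpace

theorem toEuclideanLin_outerMat_apply {d : ℕ} (u v : EuclideanSpace ℝ (Fin d)) :
    Matrix.toEuclideanLin (outerMat u) v = ⟪u, v⟫ • u := by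
  ext i
  simp only [outerMat, Matrix.ofLp_toLpLin, Matrix.toLin'_apply, Matrix.mulVec, dotProduct,
    Matrix.of_apply, PiLp.inner_apply, RCLike.inner_apply, Real.ringHom_apply, PiLp.smul_apply,
    smul_eq_mul, sum_mul]
  exact sum_congr rfl fun _ _ => by ring

theorem real_inner_toEuclideanLin_fcov {d : ℕ} (S : Finset (EuclideanSpace ℝ (Fin d)))
    (v : EuclideanSpace ℝ (Fin d)) :
    ⟪v, Matrix.toEuclideanLin (fcov S) v⟫ = (#S : ℝ)⁻¹ * ∑ x ∈ S, ⟪v, x - fmean S⟫ ^ 2 := by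
  simp only [fcov, map_smul, map_sum, LinearMap.smul_apply, LinearMap.sum_apply,
    toEuclideanLin_outerMat_apply, real_inner_smul_right, inner_sum, real_inner_comm v, sq]

theorem real_inner_toEuclideanLin_le_opNorm {d : ℕ} (M : Matrix (Fin d) (Fin d) ℝ)
    {v : EuclideanSpace ℝ (Fin d)} (hv : ‖v‖ = 1) :
    ⟪v, Matrix.toEuclideanLin M v⟫ ≤ opNorm M := by
  set L := LinearMap.toContinuousLinearMap (Matrix.toEuclideanLin M)
  calc ⟪v, L v⟫ ≤ ‖v‖ * ‖L v‖ := real_inner_le_norm _ _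
    _ ≤ ‖v‖ * (‖L‖ * ‖v‖) := by gcongr; exact L.le_opNorm v
    _ = opNorm M := by rw [hv, one_mul, mul_one, opNorm]

theorem fstdev_nonneg {d : ℕ} (S : Finset (EuclideanSpace ℝ (Fin d))) : 0 ≤ fstdev S :=
  Real.sqrt_nonneg _

theorem sum_inner_sub_fmean_sq_le {d : ℕ} (S : Finset (EuclideanSpace ℝ (Fin d)))
    {v : EuclideanSpace ℝ (Fin d)} (hv : ‖v‖ = 1) :
    ∑ x ∈ S, ⟪v, x - fmean S⟫ ^ 2 ≤ #S * fstdev S ^ 2 := by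
  rcases S.eq_empty_or_nonempty with rfl | hS
  · simp
  have hcard : (0 : ℝ) < #S := by exact_mod_cast hS.card_pos
  have h := real_inner_toEuclideanLin_fcov S v ▸ real_inner_toEuclideanLin_le_opNorm (fcov S) hv
  have h0 : 0 ≤ opNorm (fcov S) := norm_nonneg _
  rw [fstdev, Real.sq_sqrt h0]
  rwa [inv_mul_le_iff₀ hcard] at h

theorem le_neg_inner_sub_of_inner_sub_le {E : Type*} [NormedAddCommGroup E]
    [InnerProductSpace ℝ E] {m μ x : E} {a t : ℝ} (hfar : a + t ≤ ‖m - μ‖)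
    (hx : ⟪‖m - μ‖⁻¹ • (m - μ), x - μ⟫ ≤ a) : t ≤ -⟪‖m - μ‖⁻¹ • (m - μ), x - m⟫ := by
  have hproj : ⟪‖m - μ‖⁻¹ • (m - μ), m - μ⟫ = ‖m - μ‖ := by
    rw [real_inner_smul_left, real_inner_self_eq_norm_sq]
    rcases eq_or_ne ‖m - μ‖ 0 with h | h
    · simp [h]
    · field_simp
  have hsplit : x - m = (x - μ) - (m - μ) := by abel
  rw [hsplit, inner_sub_right, hproj]
  linarith

theorem card_mul_sq_le_card_mul_fstdev_sq {d : ℕ} {S F : Finset (EuclideanSpace ℝ (Fin d))}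
    (hF : F ⊆ S) {v : EuclideanSpace ℝ (Fin d)} (hv : ‖v‖ = 1) {t : ℝ} (ht : 0 ≤ t)
    (hdev : ∀ x ∈ F, t ≤ |⟪v, x - fmean S⟫|) :
    #F * t ^ 2 ≤ #S * fstdev S ^ 2 :=
  calc #F * t ^ 2 = ∑ _x ∈ F, t ^ 2 := by rw [sum_const, nsmul_eq_mul]
    _ ≤ ∑ x ∈ F, ⟪v, x - fmean S⟫ ^ 2 :=
      sum_le_sum fun x hx => sq_abs ⟪v, x - fmean S⟫ ▸ pow_le_pow_left₀ ht (hdev x hx) 2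
    _ ≤ ∑ x ∈ S, ⟪v, x - fmean S⟫ ^ 2 :=
      sum_le_sum_of_subset_of_nonneg hF fun _ _ _ => sq_nonneg _
    _ ≤ #S * fstdev S ^ 2 := sum_inner_sub_fmean_sq_le S hv

theorem card_filter_inner_sub_le {d : ℕ} {S : Finset (EuclideanSpace ℝ (Fin d))}
    {μ : EuclideanSpace ℝ (Fin d)} {s C α : ℝ} (hC : 1 ≤ C) (hα : 0 < α)
    (hσ : fstdev S < s / 100) (hfar : 46 * C * s / √α ≤ ‖μ - fmean S‖) :
    (#(S.filter fun x => ⟪‖fmean S - μ‖⁻¹ • (fmean S - μ), x - μ⟫ ≤ 45 * C * s / √α) : ℝ)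
      ≤ α / 10000 * #S := by
  have hs : 0 < s := by linarith [fstdev_nonneg S]
  set t := C * s / √α with ht_def
  have ht : 0 < t := by have := Real.sqrt_pos.2 hα; positivity
  have hfar' : 45 * C * s / √α + t ≤ ‖fmean S - μ‖ := by
    rw [norm_sub_rev]; convert hfar using 1; ring
  have hv : ‖‖fmean S - μ‖⁻¹ • (fmean S - μ)‖ = 1 :=
    norm_smul_inv_norm (norm_pos_iff.1 (by linarith [show 0 < 45 * C * s / √α by positivity]))
  have hcheb := card_mul_sq_le_card_mul_fstdev_sq (filter_subset _ S) hv ht.le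
    fun x hx => (le_neg_inner_sub_of_inner_sub_le hfar' (mem_filter.1 hx).2).trans (neg_le_abs _)
  have hσt : fstdev S ^ 2 ≤ α / 10000 * t ^ 2 := by
    have hσ2 : fstdev S ^ 2 ≤ (s / 100) ^ 2 := pow_le_pow_left₀ (fstdev_nonneg S) hσ.le 2
    have ht2 : α / 10000 * t ^ 2 = C ^ 2 * s ^ 2 / 10000 := by
      rw [ht_def, div_pow, Real.sq_sqrt hα.le]; field_simp
    rw [ht2]
    nlinarith [mul_le_mul_of_nonneg_right (one_le_pow₀ hC : 1 ≤ C ^ 2) (sq_nonneg s)]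
  refine le_of_mul_le_mul_right ?_ (pow_pos ht 2)
  calc _ ≤ #S * fstdev S ^ 2 := hcheb
    _ ≤ #S * (α / 10000 * t ^ 2) := by gcongr
    _ = _ := by ring

theorem sum_card_le_card_of_pairwiseDisjoint {ι α : Type*} [DecidableEq α] {J : Finset ι}
    {S : ι → Finset α} {T : Finset α} (hsub : ∀ j ∈ J, S j ⊆ T)
    (hdisj : (J : Set ι).PairwiseDisjoint S) : ∑ j ∈ J, #(S j) ≤ #T :=
  card_biUnion hdisj ▸ card_le_card (biUnion_subset.2 hsub)

theorem close_points_small_weight_general {d k : ℕ} (T : Finset (EuclideanSpace ℝ (Fin d)))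
    (S : Fin k → Finset (EuclideanSpace ℝ (Fin d)))
    (hSsub : ∀ j, S j ⊆ T)
    (hSdisj : ∀ j j' : Fin k, j ≠ j' → Disjoint (S j) (S j'))
    (μ : EuclideanSpace ℝ (Fin d)) (s C α : ℝ)
    (hC : 1 ≤ C) (hα0 : 0 < α)
    (hfar : ∀ j, fstdev (S j) < s / 100 →
      46 * C * s / Real.sqrt α ≤ ‖μ - fmean (S j)‖)
    (w : EuclideanSpace ℝ (Fin d) → ℝ)
    (hw01 : ∀ x ∈ T, 0 ≤ w x ∧ w x ≤ 1)
    (hwsum : 0.97 * α * (T.card : ℝ) ≤ ∑ x ∈ T, w x) :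
    ∑ j ∈ Finset.univ.filter (fun j : Fin k => fstdev (S j) < s / 100),
      ∑ x ∈ (S j).filter (fun x =>
          (inner ℝ (‖fmean (S j) - μ‖⁻¹ • (fmean (S j) - μ)) (x - μ) : ℝ)
            ≤ 45 * C * s / Real.sqrt α), w x
      ≤ 0.002 * ∑ x ∈ T, w x := by
  set J := univ.filter fun j : Fin k => fstdev (S j) < s / 100
  have hcluster : ∀ j ∈ J, ∑ x ∈ (S j).filter (fun x =>
      ⟪‖fmean (S j) - μ‖⁻¹ • (fmean (S j) - μ), x - μ⟫ ≤ 45 * C * s / √α), w x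
        ≤ α / 10000 * #(S j) := by
    intro j hj
    have hσ := (mem_filter.1 hj).2
    refine le_trans ?_ (card_filter_inner_sub_le hC hα0 hσ (hfar j hσ))
    simpa using sum_le_card_nsmul _ w 1 fun x hx => (hw01 x (hSsub j (filter_subset _ _ hx))).2
  have hcard : ∑ j ∈ J, (#(S j) : ℝ) ≤ #T := by
    exact_mod_cast sum_card_le_card_of_pairwiseDisjoint (fun j _ => hSsub j)
      fun i _ j _ hij => hSdisj i j hij
  calc _ ≤ ∑ j ∈ J, α / 10000 * #(S j) := sum_le_sum hcluster
    _ = α / 10000 * ∑ j ∈ J, (#(S j) : ℝ) := (mul_sum _ _ _).symm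
    _ ≤ α / 10000 * #T := by gcongr
    _ ≤ 0.002 * ∑ x ∈ T, w x := by nlinarith [mul_nonneg hα0.le (Nat.cast_nonneg (α := ℝ) #T)]

/-- Points of small-deviation clusters close to `μ` carry little weight.
For clusters `S_j` with `σ_{S_j} < s/100` whose means are at distance at least `46 C s/√α` from
`μ`, the total weight of the points of `S_j` whose projection along the unit vector in direction
`μ_{S_j} − μ` is at most `45 C s/√α` is at most `0.002 ∑_{x∈T} w_x`. -/
theorem close_points_small_weight {d k : ℕ} (T : Finset (EuclideanSpace ℝ (Fin d)))
    (S : Fin k → Finset (EuclideanSpace ℝ (Fin d)))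
    (hSsub : ∀ j, S j ⊆ T)
    (hSne : ∀ j, (S j).Nonempty)
    (hSdisj : ∀ j j' : Fin k, j ≠ j' → Disjoint (S j) (S j'))
    (μ : EuclideanSpace ℝ (Fin d)) (s C α : ℝ)
    (hs : 0 < s) (hC : 1 ≤ C) (hα0 : 0 < α) (hα1 : α < 1)
    (hfar : ∀ j, fstdev (S j) < s / 100 →
      46 * C * s / Real.sqrt α ≤ ‖μ - fmean (S j)‖)
    (w : EuclideanSpace ℝ (Fin d) → ℝ)
    (hw01 : ∀ x ∈ T, 0 ≤ w x ∧ w x ≤ 1)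
    (hwsum : 0.97 * α * (T.card : ℝ) ≤ ∑ x ∈ T, w x) :
    ∑ j ∈ Finset.univ.filter (fun j : Fin k => fstdev (S j) < s / 100),
      ∑ x ∈ (S j).filter (fun x =>
          (inner ℝ (‖fmean (S j) - μ‖⁻¹ • (fmean (S j) - μ)) (x - μ) : ℝ)
            ≤ 45 * C * s / Real.sqrt α), w x
      ≤ 0.002 * ∑ x ∈ T, w x :=
  close_points_small_weight_general T S hSsub hSdisj μ s C α hC hα0 hfar w hw01 hwsum
end

section
/- Let S be a finite set of points in ℝ^d, let α ∈ (0,1) with α·|S| ≥ 2, and let β ≥ 0. Suppose that every subset S̃ ⊆ S with |S̃| ≥ (1−α)·|S| satisfies ‖μ_{S̃}‖₂ ≤ β. Then every subset S' ⊆ S with |S'| ≥ (α/2)·|S| satisfies ‖μ_{S'}‖₂ ≤ 4β/α. -/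
open scoped BigOperators

/-!
A set `A ⊆ S` with `|A| ≤ α|S|` has `‖∑_A x‖ ≤ 2β|S|`, since `∑_A = ∑_S - ∑_{S \ A}` and both `S`
and `S \ A` are large. For `S'` with `|S'| ≥ α|S|/2`, pick `k` between `α|S|/2` and
`min(|S'|, α|S|)`; averaging over the `k`-subsets of `S'` gives `k ‖∑_{S'} x‖ ≤ |S'| · 2β|S|`,
i.e. `‖μ_{S'}‖ ≤ 2β|S|/k ≤ 4β/α`.
-/

open Finset

section Averaging

variable {ι E : Type*} [DecidableEq ι]

theorem sum_powersetCard_sum [AddCommMonoid E] (A : Finset ι) (f : ι → E) {k : ℕ} (hk : 0 < k) :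
    ∑ B ∈ A.powersetCard k, ∑ i ∈ B, f i = (#A - 1).choose (k - 1) • ∑ i ∈ A, f i := by
  calc ∑ B ∈ A.powersetCard k, ∑ i ∈ B, f i
      = ∑ i ∈ A, ∑ B ∈ A.powersetCard k with {i} ⊆ B, f i := by
        refine sum_comm' fun B i => ?_
        simp only [mem_filter, mem_powersetCard, singleton_subset_iff]
        grind
    _ = (#A - 1).choose (k - 1) • ∑ i ∈ A, f i := by
        rw [smul_sum]
        refine sum_congr rfl fun i hi => ?_
        rw [sum_const, card_filter_powersetCard_subset _ _ _ (singleton_subset_iff.2 hi)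
          (by rwa [card_singleton]), card_singleton]

/-- Averaging over the `k`-subsets of `A`: each element lies in a `k / #A` fraction of them. -/
theorem natCast_mul_norm_sum_le_of_forall_powersetCard [NormedAddCommGroup E] [NormedSpace ℝ E]
    (A : Finset ι) (f : ι → E) {k : ℕ} (hk : 0 < k) (hkA : k ≤ #A) {C : ℝ}
    (hC : ∀ B ∈ A.powersetCard k, ‖∑ i ∈ B, f i‖ ≤ C) :
    k * ‖∑ i ∈ A, f i‖ ≤ #A * C := by
  obtain ⟨j, rfl⟩ : ∃ j, k = j + 1 := ⟨k - 1, by omega⟩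
  obtain ⟨n, hn⟩ : ∃ n, #A = n + 1 := ⟨#A - 1, by omega⟩
  have hchoose :
      ((n + 1 : ℕ) : ℝ) * n.choose j = (n + 1).choose (j + 1) * ((j + 1 : ℕ) : ℝ) := by
    exact_mod_cast Nat.add_one_mul_choose_eq n j
  have hpos : (0 : ℝ) < n.choose j := by exact_mod_cast Nat.choose_pos (by omega)
  have hsum := sum_powersetCard_sum A f hk
  rw [hn, Nat.add_sub_cancel, Nat.add_sub_cancel] at hsum
  have hbound : (n.choose j : ℝ) * ‖∑ i ∈ A, f i‖ ≤ (n + 1).choose (j + 1) * C := by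
    calc (n.choose j : ℝ) * ‖∑ i ∈ A, f i‖
        = ‖∑ B ∈ A.powersetCard (j + 1), ∑ i ∈ B, f i‖ := by
          rw [hsum, RCLike.norm_nsmul ℝ, nsmul_eq_mul]
      _ ≤ ∑ B ∈ A.powersetCard (j + 1), ‖∑ i ∈ B, f i‖ := norm_sum_le _ _
      _ ≤ #(A.powersetCard (j + 1)) • C := sum_le_card_nsmul _ _ _ hC
      _ = (n + 1).choose (j + 1) * C := by rw [card_powersetCard, hn, nsmul_eq_mul]
  rw [hn]
  refine le_of_mul_le_mul_left ?_ hpos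
  linear_combination ((j + 1 : ℕ) : ℝ) * hbound - C * hchoose

end Averaging

section Mean

variable {d : ℕ}

theorem card_smul_fmean (T : Finset (EuclideanSpace ℝ (Fin d))) :
    (#T : ℝ) • fmean T = ∑ x ∈ T, x := by
  rcases T.eq_empty_or_nonempty with rfl | hT
  · simp
  · rw [fmean, smul_smul, mul_inv_cancel₀ (by exact_mod_cast hT.card_pos.ne'), one_smul]

theorem norm_sum_eq_card_mul_norm_fmean (T : Finset (EuclideanSpace ℝ (Fin d))) :
    ‖∑ x ∈ T, x‖ = #T * ‖fmean T‖ := by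
  rw [← card_smul_fmean, norm_smul, Real.norm_natCast]

/-- A set of at most `α |S|` points is the difference of `S` and a set of at least `(1 - α) |S|`
points. -/
theorem norm_sum_le_of_card_le_of_forall_large_subsets (S : Finset (EuclideanSpace ℝ (Fin d)))
    {α β : ℝ}
    (hbig : ∀ T ⊆ S, (1 - α) * (#S : ℝ) ≤ (#T : ℝ) → ‖fmean T‖ ≤ β)
    {A : Finset (EuclideanSpace ℝ (Fin d))} (hAS : A ⊆ S) (hA : (#A : ℝ) ≤ α * #S) :
    ‖∑ x ∈ A, x‖ ≤ 2 * β * #S := by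
  have hS : ‖fmean S‖ ≤ β := hbig S subset_rfl (by nlinarith [(#S).cast_nonneg (α := ℝ)])
  have hβ : 0 ≤ β := (norm_nonneg _).trans hS
  have hcompl_card : (#(S \ A) : ℝ) = #S - #A := by
    rw [card_sdiff_of_subset hAS, Nat.cast_sub (card_le_card hAS)]
  have hcompl : ‖fmean (S \ A)‖ ≤ β := hbig _ sdiff_subset (by rw [hcompl_card]; linarith)
  have hcompl_le : (#(S \ A) : ℝ) ≤ #S := by exact_mod_cast card_le_card sdiff_subset
  calc ‖∑ x ∈ A, x‖ = ‖∑ x ∈ S, x - ∑ x ∈ S \ A, x‖ := by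
        rw [← sum_sdiff hAS, add_sub_cancel_left]
    _ ≤ ‖∑ x ∈ S, x‖ + ‖∑ x ∈ S \ A, x‖ := norm_sub_le _ _
    _ = #S * ‖fmean S‖ + #(S \ A) * ‖fmean (S \ A)‖ := by
        rw [norm_sum_eq_card_mul_norm_fmean, norm_sum_eq_card_mul_norm_fmean]
    _ ≤ #S * β + #S * β := by gcongr
    _ = 2 * β * #S := by ring

end Mean

theorem small_subset_mean_bound_general {d : ℕ} (S : Finset (EuclideanSpace ℝ (Fin d))) (α β : ℝ)
    (hcard : 2 ≤ α * (S.card : ℝ))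
    (hbig : ∀ St ⊆ S, (1 - α) * (S.card : ℝ) ≤ (St.card : ℝ) → ‖fmean St‖ ≤ β) :
    ∀ S' ⊆ S, α / 2 * (S.card : ℝ) ≤ (S'.card : ℝ) → ‖fmean S'‖ ≤ 4 * β / α := by
  intro S' hS' hS'card
  have hα : 0 < α := pos_of_mul_pos_left (by linarith) (#S).cast_nonneg
  set k := min #S' ⌈α * #S / 2⌉₊
  have hk_lower : α * #S / 2 ≤ k := by
    simp only [k, Nat.cast_min]
    exact le_min (by linarith) (Nat.le_ceil _)
  have hk_upper : (k : ℝ) ≤ α * #S := by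
    have := Nat.ceil_lt_add_one (by positivity : 0 ≤ α * #S / 2)
    exact (Nat.cast_le.2 (min_le_right _ _)).trans (by linarith)
  have hk : 0 < k := by exact_mod_cast (by linarith : (0 : ℝ) < k)
  have hsum : (k : ℝ) * ‖∑ x ∈ S', x‖ ≤ #S' * (2 * β * #S) :=
    natCast_mul_norm_sum_le_of_forall_powersetCard S' id hk (min_le_left _ _) fun B hB =>
      norm_sum_le_of_card_le_of_forall_large_subsets S hbig
        ((mem_powersetCard.1 hB).1.trans hS') (by rw [(mem_powersetCard.1 hB).2]; exact hk_upper)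
  have hS'pos : (0 : ℝ) < #S' := Nat.cast_pos.2 (hk.trans_le (min_le_left _ _))
  rw [norm_sum_eq_card_mul_norm_fmean, mul_left_comm] at hsum
  have hmean : (k : ℝ) * ‖fmean S'‖ ≤ 2 * β * #S := le_of_mul_le_mul_left hsum hS'pos
  have hSpos : (0 : ℝ) < #S := pos_of_mul_pos_right (by linarith) hα.le
  rw [le_div_iff₀ hα]
  refine le_of_mul_le_mul_left ?_ hSpos
  nlinarith [mul_le_mul_of_nonneg_right hk_lower (norm_nonneg (fmean S'))]

/-- From means of large subsets to means of small subsets.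
If every subset `S̃ ⊆ S` with `|S̃| ≥ (1−α)|S|` has `‖μ_{S̃}‖ ≤ β`, then every subset `S' ⊆ S`
with `|S'| ≥ (α/2)|S|` has `‖μ_{S'}‖ ≤ 4β/α`. -/
theorem small_subset_mean_bound {d : ℕ} (S : Finset (EuclideanSpace ℝ (Fin d))) (α β : ℝ)
    (hα0 : 0 < α) (hα1 : α < 1) (hcard : 2 ≤ α * (S.card : ℝ)) (hβ : 0 ≤ β)
    (hbig : ∀ St ⊆ S, (1 - α) * (S.card : ℝ) ≤ (St.card : ℝ) → ‖fmean St‖ ≤ β) :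
    ∀ S' ⊆ S, α / 2 * (S.card : ℝ) ≤ (S'.card : ℝ) → ‖fmean S'‖ ≤ 4 * β / α :=
  small_subset_mean_bound_general S α β hcard hbig
end

section
/- Let S be a finite multiset of real numbers, let α ∈ (0,1), and let C ≥ 1. Suppose that at least 0.5·|S| of the elements of S are equal to 0 and at least 2α·|S| of the elements of S have absolute value at least C/√α − 1/2. Then the variance of S, which equals (1/(2|S|²))·∑_{x∈S}∑_{y∈S}(x−y)², is at least 0.25·C². -/
/-!
The variance is half the mean of `(x - y)²` over ordered pairs. Every pair made of one of the
`≥ n/2` zeros and one of the `≥ 2αn` points with `|x| ≥ t := C/√α - 1/2` (in either order)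
contributes at least `t²`, so `Var S ≥ 2 (n/2) (2αn) t² / (2n²) = α t² = (C - √α/2)² ≥ C²/4`,
the last step because `√α < 1 ≤ C`.
-/

open scoped BigOperators

/-- The mean of a finite multiset of real numbers. -/
noncomputable def msMean (S : Multiset ℝ) : ℝ := (Multiset.card S : ℝ)⁻¹ * S.sum

/-- The variance of a finite multiset of real numbers. -/
noncomputable def msVar (S : Multiset ℝ) : ℝ :=
  (Multiset.card S : ℝ)⁻¹ * (S.map fun x => (x - msMean S) ^ 2).sum

namespace Multiset

variable {α β γ : Type*}

lemma sum_map_le_sum_map_of_le [AddCommMonoid β] [PartialOrder β] [IsOrderedAddMonoid β]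
    {M S : Multiset α} (hMS : M ≤ S) {f : α → β} (hf : ∀ x ∈ S, 0 ≤ f x) :
    (M.map f).sum ≤ (S.map f).sum := by
  obtain ⟨R, rfl⟩ := le_iff_exists_add.mp hMS
  rw [map_add, sum_add]
  exact le_add_of_nonneg_right <| sum_nonneg fun _ hy => by
    obtain ⟨x, hx, rfl⟩ := mem_map.mp hy
    exact hf x (mem_add.mpr (Or.inr hx))

lemma card_mul_card_mul_le_sum_map_sum_map {A : Multiset α} {B : Multiset γ} {f : α → γ → ℝ} {d : ℝ}
    (hd : ∀ a ∈ A, ∀ b ∈ B, d ≤ f a b) :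
    card A * card B * d ≤ (A.map fun a => (B.map (f a)).sum).sum := by
  have hrow : ∀ a ∈ A, card B * d ≤ (B.map (f a)).sum := fun a ha => by
    simpa using sum_map_le_sum_map (fun _ => d) (f a) (hd a ha)
  simpa [mul_assoc] using sum_map_le_sum_map (fun _ => card B * d) _ hrow

lemma filter_add_filter_le_of_disjoint {p q : α → Prop} [DecidablePred p] [DecidablePred q]
    (S : Multiset α) (hpq : ∀ x, p x → ¬ q x) : S.filter p + S.filter q ≤ S := by
  rw [filter_add_filter, (filter_eq_nil (p := fun a => p a ∧ q a)).mpr fun x _ h => hpq x h.1 h.2,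
    add_zero]
  exact filter_le _ _

lemma sum_map_quadratic {R : Type*} [CommSemiring R] (S : Multiset R) (a b c : R) :
    (S.map fun x => a * x ^ 2 + b * x + c).sum
      = a * (S.map fun x => x ^ 2).sum + b * S.sum + c * card S := by
  induction S using Multiset.induction with
  | empty => simp
  | cons x S ih =>
    simp only [map_cons, sum_cons, ih, card_cons]
    push_cast
    ring

end Multiset

open Multiset

theorem msVar_eq_pairwise (S : Multiset ℝ) :
    msVar S = (2 * (card S : ℝ) ^ 2)⁻¹ * (S.map fun x => (S.map fun y => (x - y) ^ 2).sum).sum := by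
  rcases eq_or_ne S 0 with rfl | hS
  · simp [msVar]
  have hn : (card S : ℝ) ≠ 0 := by simpa using hS
  have hsq : ∀ c, (S.map fun x => (x - c) ^ 2).sum
      = (S.map fun x => x ^ 2).sum - 2 * c * S.sum + card S * c ^ 2 := fun c => by
    rw [show (fun x => (x - c) ^ 2) = fun x => 1 * x ^ 2 + (-2 * c) * x + c ^ 2 from
      funext fun x => by ring, sum_map_quadratic]
    ring
  have hpair : (S.map fun x => (S.map fun y => (x - y) ^ 2).sum).sum
      = 2 * card S * (S.map fun x => x ^ 2).sum - 2 * S.sum ^ 2 := by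
    have hinner : ∀ x, (S.map fun y => (x - y) ^ 2).sum
        = card S * x ^ 2 + (-2 * S.sum) * x + (S.map fun x => x ^ 2).sum := fun x => by
      rw [show (fun y => (x - y) ^ 2) = fun y => (y - x) ^ 2 from funext (sub_sq_comm x), hsq]
      ring
    simp only [hinner, sum_map_quadratic]
    ring
  rw [msVar, hsq, hpair, msMean]
  field_simp
  ring

theorem two_mul_card_mul_card_mul_le_sum_sum_sq_sub {S A B : Multiset ℝ} (hAB : A + B ≤ S)
    {d : ℝ} (hd : ∀ a ∈ A, ∀ b ∈ B, d ≤ (a - b) ^ 2) :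
    2 * card A * card B * d ≤ (S.map fun x => (S.map fun y => (x - y) ^ 2).sum).sum := by
  set g : Multiset ℝ → ℝ → ℝ := fun M x => (M.map fun y => (x - y) ^ 2).sum
  have hg_nonneg : ∀ M x, 0 ≤ g M x := fun M x =>
    sum_nonneg fun _ hz => by obtain ⟨y, -, rfl⟩ := mem_map.mp hz; positivity
  have hg_le : ∀ M ≤ S, ∀ x, g M x ≤ g S x := fun M hM x =>
    sum_map_le_sum_map_of_le hM fun y _ => sq_nonneg (x - y)
  calc 2 * card A * card B * d = card A * card B * d + card B * card A * d := by ring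
    _ ≤ (A.map (g B)).sum + (B.map (g A)).sum :=
      add_le_add (card_mul_card_mul_le_sum_map_sum_map hd)
        (card_mul_card_mul_le_sum_map_sum_map fun b hb a ha => (hd a ha b hb).trans_eq
          (sub_sq_comm a b))
    _ ≤ (A.map (g S)).sum + (B.map (g S)).sum :=
      add_le_add
        (sum_map_le_sum_map _ _ fun x _ => hg_le B ((Multiset.le_add_left B A).trans hAB) x)
        (sum_map_le_sum_map _ _ fun x _ => hg_le A ((Multiset.le_add_right A B).trans hAB) x)
    _ = ((A + B).map (g S)).sum := by rw [Multiset.map_add, sum_add]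
    _ ≤ (S.map (g S)).sum := sum_map_le_sum_map_of_le hAB fun x _ => hg_nonneg S x

lemma sq_div_four_le_mul_sq_div_sqrt_sub_half {α C : ℝ} (hα : 0 < α) (hαC : √α ≤ C) :
    C ^ 2 / 4 ≤ α * (C / √α - 1 / 2) ^ 2 := by
  have hsqrt : 0 < √α := Real.sqrt_pos.mpr hα
  have hrescale : α * (C / √α - 1 / 2) ^ 2 = (C - √α / 2) ^ 2 := by
    field_simp
    rw [Real.sq_sqrt hα.le]
  rw [hrescale]
  nlinarith

theorem two_mul_count_zero_mul_card_mul_le_sum_sum_sq_sub (S : Multiset ℝ) {t : ℝ} (ht : 0 < t) :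
    2 * count 0 S * card (S.filter (t ≤ |·|)) * t ^ 2
      ≤ (S.map fun x => (S.map fun y => (x - y) ^ 2).sum).sum := by
  have hAB : S.filter (0 = ·) + S.filter (t ≤ |·|) ≤ S :=
    filter_add_filter_le_of_disjoint S fun x hx hxt => by
      subst hx
      rw [abs_zero] at hxt
      linarith
  have hd : ∀ a ∈ S.filter (0 = ·), ∀ b ∈ S.filter (t ≤ |·|), t ^ 2 ≤ (a - b) ^ 2 := by
    intro a ha b hb
    rw [← (mem_filter.mp ha).2, zero_sub, neg_sq, ← sq_abs b]
    exact pow_le_pow_left₀ ht.le (mem_filter.mp hb).2 2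
  rw [count_eq_card_filter_eq]
  exact two_mul_card_mul_card_mul_le_sum_sum_sq_sub hAB hd

/-- Variance lower bound from two separated groups of points.
If a nonempty finite multiset `S` of reals has at least `0.5 |S|` elements equal to `0` and at
least `2α|S|` elements of absolute value at least `C/√α − 1/2` (with `C ≥ 1`, `0 < α < 1`), then
its variance — which equals `(1/(2|S|²)) ∑_{x∈S} ∑_{y∈S} (x−y)²` — is at least `0.25 C²`. -/
theorem variance_lower_bound (S : Multiset ℝ) (α C : ℝ)
    (hα0 : 0 < α) (hα1 : α < 1) (hC : 1 ≤ C) (hS : S ≠ 0)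
    (hzero : 0.5 * (Multiset.card S : ℝ) ≤ (S.count 0 : ℝ))
    (hbig : 2 * α * (Multiset.card S : ℝ) ≤
      ((Multiset.card (S.filter fun x => C / Real.sqrt α - 1 / 2 ≤ |x|)) : ℝ)) :
    msVar S = (2 * (Multiset.card S : ℝ) ^ 2)⁻¹ *
        (S.map fun x => (S.map fun y => (x - y) ^ 2).sum).sum ∧
    0.25 * C ^ 2 ≤ msVar S := by
  refine ⟨msVar_eq_pairwise S, ?_⟩
  set t := C / √α - 1 / 2
  have hsqrt : √α < C := ((Real.sqrt_lt' one_pos).mpr (by rwa [one_pow])).trans_le hC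
  have ht : 0 < t := by
    have : 1 < C / √α := (one_lt_div (Real.sqrt_pos.mpr hα0)).mpr hsqrt
    simp only [t]
    linarith
  have hpair := two_mul_count_zero_mul_card_mul_le_sum_sum_sq_sub S ht
  have hn : (0 : ℝ) < card S := by simpa [Nat.pos_iff_ne_zero] using hS
  rw [msVar_eq_pairwise]
  have hkey : C ^ 2 / 4 ≤ α * t ^ 2 := sq_div_four_le_mul_sq_div_sqrt_sub_half hα0 hsqrt.le
  calc 0.25 * C ^ 2 ≤ α * t ^ 2 := by linarith
    _ = (2 * (card S : ℝ) ^ 2)⁻¹ * (2 * (0.5 * card S) * (2 * α * card S) * t ^ 2) := by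
      field_simp
      ring
    _ ≤ (2 * (card S : ℝ) ^ 2)⁻¹ * (2 * count 0 S * card (S.filter (t ≤ |·|)) * t ^ 2) := by
      gcongr
    _ ≤ _ := by gcongr
end
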